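/- If m is a Weber node of a configuration and j ≥ 1 robots simultaneously move from node a to an adjacent node b with d(b,m) = d(a,m) - 1 (where λ(a) ≥ j), then the minimum consistency over all meeting nodes in the new configuration equals the old minimum consistency minus j, and m is a Weber node of the new configuration. -/

import Mathlib

/-!
Moving `j` robots from `a` to `b` changes the consistency at any node `m'` by
`(d(b,m') - d(a,m')) · j`. Since `a` and `b` are adjacent this change is at least `-j`
everywhere, and it is exactly `-j` at the Weber node `m`, which lies one step closer to `b`.
So `m` loses the most and stays a Weber node.
-/

def mdist (a b : ℤ × ℤ) : ℕ := (a.1 - b.1).natAbs + (a.2 - b.2).natAbs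

noncomputable def consistency (lam : (ℤ × ℤ) →₀ ℕ) (m : ℤ × ℤ) : ℕ :=
  lam.sum fun v k => mdist v m * k

def IsWeber (lam : (ℤ × ℤ) →₀ ℕ) (M : Finset (ℤ × ℤ)) (m : ℤ × ℤ) : Prop :=
  m ∈ M ∧ ∀ m' ∈ M, consistency lam m ≤ consistency lam m'

lemma mdist_triangle (a b c : ℤ × ℤ) : mdist a c ≤ mdist a b + mdist b c := by
  have h₁ : (a.1 - c.1).natAbs ≤ (a.1 - b.1).natAbs + (b.1 - c.1).natAbs := by
    simpa using Int.natAbs_add_le (a.1 - b.1) (b.1 - c.1)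
  have h₂ : (a.2 - c.2).natAbs ≤ (a.2 - b.2).natAbs + (b.2 - c.2).natAbs := by
    simpa using Int.natAbs_add_le (a.2 - b.2) (b.2 - c.2)
  unfold mdist
  omega

lemma consistency_add (f g : (ℤ × ℤ) →₀ ℕ) (m : ℤ × ℤ) :
    consistency (f + g) m = consistency f m + consistency g m :=
  Finsupp.sum_add_index' (fun _ => mul_zero _) (fun _ _ _ => mul_add _ _ _)

lemma consistency_single (x : ℤ × ℤ) (j : ℕ) (m : ℤ × ℤ) :
    consistency (Finsupp.single x j) m = mdist x m * j :=
  Finsupp.sum_single_index (mul_zero _)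

lemma consistency_move {lam : (ℤ × ℤ) →₀ ℕ} {a : ℤ × ℤ} {j : ℕ} (ha : j ≤ lam a)
    (b m' : ℤ × ℤ) :
    consistency (lam + Finsupp.single b j - Finsupp.single a j) m' + mdist a m' * j
      = consistency lam m' + mdist b m' * j := by
  have hle : Finsupp.single a j ≤ lam + Finsupp.single b j :=
    Finsupp.single_le_iff.2 (ha.trans (Nat.le_add_right _ _))
  rw [← consistency_single, ← consistency_single, ← consistency_add, ← consistency_add,
    tsub_add_cancel_of_le hle]

lemma consistency_le_consistency_move_add {lam : (ℤ × ℤ) →₀ ℕ} {a b : ℤ × ℤ} {j : ℕ}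
    (ha : j ≤ lam a) (hab : mdist a b = 1) (m' : ℤ × ℤ) :
    consistency lam m' ≤ consistency (lam + Finsupp.single b j - Finsupp.single a j) m' + j := by
  have hmove := consistency_move ha b m'
  have hstep : mdist a m' * j ≤ mdist b m' * j + j := by
    calc mdist a m' * j ≤ (mdist a b + mdist b m') * j := by gcongr; exact mdist_triangle a b m'
      _ = mdist b m' * j + j := by rw [hab]; ring
  omega

lemma consistency_move_add_of_closer {lam : (ℤ × ℤ) →₀ ℕ} {a b m : ℤ × ℤ} {j : ℕ}
    (ha : j ≤ lam a) (hb : mdist b m + 1 = mdist a m) :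
    consistency (lam + Finsupp.single b j - Finsupp.single a j) m + j = consistency lam m := by
  have hmove := consistency_move ha b m
  rw [← hb, add_mul, one_mul, ← add_assoc] at hmove
  omega

theorem stmt_2_general (lam : (ℤ × ℤ) →₀ ℕ) (M : Finset (ℤ × ℤ))
    (m a b : ℤ × ℤ) (j : ℕ) (ha : j ≤ lam a)
    (hm : IsWeber lam M m)
    (hab : mdist a b = 1) (hb : mdist b m + 1 = mdist a m) :
    IsWeber (lam + Finsupp.single b j - Finsupp.single a j) M m ∧
      consistency (lam + Finsupp.single b j - Finsupp.single a j) m + j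
        = consistency lam m := by
  have hm_eq := consistency_move_add_of_closer ha hb
  refine ⟨⟨hm.1, fun m' hm' => ?_⟩, hm_eq⟩
  have := hm.2 m' hm'
  have := consistency_le_consistency_move_add ha hab m'
  omega

theorem stmt_2 (lam : (ℤ × ℤ) →₀ ℕ) (M : Finset (ℤ × ℤ)) (hM : M.Nonempty)
    (m a b : ℤ × ℤ) (j : ℕ) (hj : 1 ≤ j) (ha : j ≤ lam a)
    (hm : IsWeber lam M m)
    (hab : mdist a b = 1) (hb : mdist b m + 1 = mdist a m) :
    IsWeber (lam + Finsupp.single b j - Finsupp.single a j) M m ∧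
      consistency (lam + Finsupp.single b j - Finsupp.single a j) m + j
        = consistency lam m :=
  stmt_2_general lam M m a b j ha hm hab hb
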